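/- For iid random variables with mean μ ≠ 0 and variance σ², and finite index sets u, v ⊆ {1,...,n}, the covariance Cov(x_u, x_v) = μ^{|u|+|v|}((1+ρ²)^{|u∩v|} − 1), where x_u = ∏_{i∈u} X_i and ρ = σ/μ. -/

import Mathlib

/-! Write `x_u x_v = ∏ᵢ fᵢ(Xᵢ)` with `fᵢ(x) = x^[i ∈ u] · x^[i ∈ v]`. By independence the
expectation factors over `i`, and the factor is `1`, `μ` or `E[Xᵢ²] = μ²(1 + ρ²)` according as
`i` lies in neither, one or both of `u`, `v`. Hence `E[x_u x_v] = μ^(|u|+|v|) (1 + ρ²)^|u ∩ v|`,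
and `E[x_u] = μ^|u|` is the case `v = ∅`. -/

open MeasureTheory ProbabilityTheory

namespace ProbabilityTheory

variable {Ω : Type*} [MeasurableSpace Ω] {P : Measure Ω} [IsProbabilityMeasure P]

lemma integral_sq_eq_variance_add_sq {Y : Ω → ℝ} (hY : MemLp Y 2 P) :
    ∫ ω, Y ω ^ 2 ∂P = variance Y P + (∫ ω, Y ω ∂P) ^ 2 := by
  rw [variance_eq_sub hY]
  simp only [Pi.pow_apply, sub_add_cancel]

variable {ι : Type*} [Fintype ι] [DecidableEq ι] {X : ι → Ω → ℝ} {m r : ℝ}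

lemma iIndepFun.integral_prod_mul_prod (hIndep : iIndepFun X P)
    (hmeas : ∀ i, Measurable (X i)) (hmean : ∀ i, ∫ ω, X i ω ∂P = m)
    (hsq : ∀ i, ∫ ω, X i ω ^ 2 ∂P = m ^ 2 * r) (u v : Finset ι) :
    ∫ ω, (∏ i ∈ u, X i ω) * (∏ i ∈ v, X i ω) ∂P = m ^ (u.card + v.card) * r ^ (u ∩ v).card := by
  set f : ι → ℝ → ℝ := fun i x => (if i ∈ u then x else 1) * (if i ∈ v then x else 1)
  have hprod (ω : Ω) : (∏ i ∈ u, X i ω) * (∏ i ∈ v, X i ω) = ∏ i, f i (X i ω) := by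
    simp only [f, Finset.prod_mul_distrib, Fintype.prod_ite_mem]
  have hfactor (i : ι) : ∫ ω, f i (X i ω) ∂P =
      (if i ∈ u then m else 1) * (if i ∈ v then m else 1) * (if i ∈ u ∩ v then r else 1) := by
    by_cases hu : i ∈ u <;> by_cases hv : i ∈ v <;>
      simp [f, hu, hv, hmean, ← sq, hsq]
  have hf : ∀ i, AEStronglyMeasurable (f i) (P.map (X i)) := by
    intro i
    by_cases hu : i ∈ u <;> by_cases hv : i ∈ v <;> simp only [f, hu, hv, if_true, if_false] <;>
      fun_prop
  simp_rw [hprod, hIndep.integral_fun_prod_comp (fun i => (hmeas i).aemeasurable) hf, hfactor,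
    Finset.prod_mul_distrib, Fintype.prod_ite_mem, Finset.prod_const, pow_add]

end ProbabilityTheory

theorem stmt2_general {Ω : Type*} [MeasurableSpace Ω] (P : Measure Ω) [IsProbabilityMeasure P]
    (n : ℕ) (X : Fin n → Ω → ℝ) (m σ : ℝ) (hm : m ≠ 0)
    (hIndep : iIndepFun X P)
    (hmeas : ∀ i, Measurable (X i))
    (hL2 : ∀ s : Finset (Fin n), MemLp (fun ω => ∏ i ∈ s, X i ω) 2 P)
    (hmean : ∀ i, ∫ ω, X i ω ∂P = m)
    (hvar : ∀ i, variance (X i) P = σ ^ 2)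
    (u v : Finset (Fin n)) :
    (∫ ω, (∏ i ∈ u, X i ω) * (∏ i ∈ v, X i ω) ∂P)
        - (∫ ω, ∏ i ∈ u, X i ω ∂P) * (∫ ω, ∏ i ∈ v, X i ω ∂P)
      = m ^ (u.card + v.card) * ((1 + (σ / m) ^ 2) ^ (u ∩ v).card - 1) := by
  have hsq (i : Fin n) : ∫ ω, X i ω ^ 2 ∂P = m ^ 2 * (1 + (σ / m) ^ 2) := by
    rw [integral_sq_eq_variance_add_sq (by simpa using hL2 {i}), hvar, hmean]
    field_simp
    ring
  have hmoment := hIndep.integral_prod_mul_prod hmeas hmean hsq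
  have hmean_prod (s : Finset (Fin n)) : ∫ ω, ∏ i ∈ s, X i ω ∂P = m ^ s.card := by
    simpa using hmoment s ∅
  rw [hmoment, hmean_prod, hmean_prod, pow_add]
  ring

/-- For iid random variables with mean `m ≠ 0` and variance `σ²`, and finite index sets
`u, v`, the covariance `Cov(x_u, x_v) = E[x_u x_v] − E[x_u]·E[x_v]` equals
`m^(|u|+|v|)·((1+ρ²)^(|u∩v|) − 1)` with `ρ = σ/m`. -/
theorem stmt2 {Ω : Type*} [MeasurableSpace Ω] (P : Measure Ω) [IsProbabilityMeasure P]
    (n : ℕ) (X : Fin n → Ω → ℝ) (m σ : ℝ) (hm : m ≠ 0)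
    (hIndep : iIndepFun X P)
    (hmeas : ∀ i, Measurable (X i))
    (hident : ∀ i j, IdentDistrib (X i) (X j) P P)
    (hL2 : ∀ s : Finset (Fin n), MemLp (fun ω => ∏ i ∈ s, X i ω) 2 P)
    (hmean : ∀ i, ∫ ω, X i ω ∂P = m)
    (hvar : ∀ i, variance (X i) P = σ ^ 2)
    (u v : Finset (Fin n)) :
    (∫ ω, (∏ i ∈ u, X i ω) * (∏ i ∈ v, X i ω) ∂P)
        - (∫ ω, ∏ i ∈ u, X i ω ∂P) * (∫ ω, ∏ i ∈ v, X i ω ∂P)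
      = m ^ (u.card + v.card) * ((1 + (σ / m) ^ 2) ^ (u ∩ v).card - 1) :=
  stmt2_general P n X m σ hm hIndep hmeas hL2 hmean hvar u v
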